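/- Let n, m be integers with m ≥ 2 and N := n − 2m ≥ 1, and set ℓ := (n−m)/2 ∈ ℝ. For a positive integer r and t ∈ ℝ let g_r(t) := √(2/(πr)) · exp(−(2t−r)²/(2r)). Set α := 4/(m−1), β := 2/N, and μ := (m−1)(2N+m) / (2(2N+m−1)). Then (as an equality of complex numbers, with the real left-hand side coerced into ℂ): Σ_{j ∈ ℤ} g_{m−1}(j)² · g_N(ℓ−j) = (2/π) · (1/√((m−1)(2N+m−1))) · exp(−1/(2N+m−1)) · Σ_{t ∈ ℤ} exp(−π²·t²/(α+β)) · exp(−2πi·t·μ). Moreover α + β = 2(2N+m−1)/((m−1)N), and 2N+m−1 = 2n−3m−1. -/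

import Mathlib

/-!
Completing the square, `g_r(x)² g_s(ℓ - x)` is a constant multiple of the single Gaussian
`e^{-a (x - μ)²}` with `a = 4/r + 2/s`. Poisson summation turns the lattice sum of this shifted
Gaussian into `√(π/a)` times its Fourier dual `Σ_t e^{-π² t²/a} e^{-2πi t μ}`, and the constants
combine as `2/(πr) · √(2/(πs)) · √(π/a) = 2/(π √(r (2s + r)))`.
-/

open Real

/-- Gaussian proxy for the probability mass function of `Binomial(r, 1/2)`:
`g_r(t) = √(2/(πr))·exp(-(2t-r)²/(2r))`. -/
noncomputable def gpmf (r : ℕ) (t : ℝ) : ℝ :=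
  Real.sqrt (2 / (π * r)) * Real.exp (-(2 * t - r) ^ 2 / (2 * r))

open Complex in
theorem Complex.tsum_exp_neg_mul_int_sub_sq {a : ℝ} (ha : 0 < a) (μ : ℝ) :
    ∑' n : ℤ, cexp (-a * (n - μ) ^ 2) =
      (√(π / a) : ℂ) * ∑' t : ℤ, cexp (-π ^ 2 * t ^ 2 / a) * cexp (-2 * π * I * t * μ) := by
  have ha' : (a : ℂ) ≠ 0 := ofReal_ne_zero.2 ha.ne'
  have hA : 0 < ((a / π : ℝ) : ℂ).re := by rw [ofReal_re]; positivity
  have hsqrt : ((a / π : ℝ) : ℂ) ^ (1 / 2 : ℂ) = (√(a / π) : ℂ) := by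
    rw [sqrt_eq_rpow, ofReal_cpow (by positivity)]; norm_num
  have hsqrt_inv : (√(π / a) : ℂ) = 1 / (√(a / π) : ℂ) := by
    rw [← inv_div, sqrt_inv]; push_cast; ring
  have hpoisson := Complex.tsum_exp_neg_quadratic hA ((a / π * μ : ℝ) : ℂ)
  calc ∑' n : ℤ, cexp (-a * (n - μ) ^ 2)
      = cexp (-a * μ ^ 2) * ∑' n : ℤ,
          cexp (-π * ((a / π : ℝ) : ℂ) * n ^ 2 + 2 * π * ((a / π * μ : ℝ) : ℂ) * n) := by
        rw [← tsum_mul_left]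
        refine tsum_congr fun n ↦ ?_
        rw [← Complex.exp_add]
        congr 1
        push_cast
        field_simp
        ring
    _ = (√(π / a) : ℂ) * ∑' t : ℤ, cexp (-π ^ 2 * t ^ 2 / a) * cexp (-2 * π * I * t * μ) := by
        rw [hpoisson, hsqrt, hsqrt_inv, mul_left_comm, ← tsum_mul_left]
        congr 1
        refine tsum_congr fun t ↦ ?_
        rw [← Complex.exp_add, ← Complex.exp_add]
        congr 1
        push_cast
        field_simp
        ring_nf
        rw [I_sq]
        ring

theorem gpmf_eq_sqrt_mul_exp (r : ℕ) (t : ℝ) :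
    gpmf r t = √(2 / (π * r)) * exp (-(2 / r) * (t - r / 2) ^ 2) := by
  rw [gpmf]
  congr 2
  rcases eq_or_ne (r : ℝ) 0 with hr | hr
  · simp [hr]
  · field_simp

theorem gpmf_sq_mul_gpmf_sub {r s : ℕ} (hr : 0 < r) (hs : 0 < s) (ℓ x : ℝ) :
    gpmf r x ^ 2 * gpmf s (ℓ - x) =
      2 / (π * r) * √(2 / (π * s)) *
        exp (-(4 / r + 2 / s) * (x - r * (s + 2 * ℓ) / (2 * (2 * s + r))) ^ 2
          - (r + s - 2 * ℓ) ^ 2 / (2 * s + r)) := by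
  have hr' : (0 : ℝ) < r := Nat.cast_pos.2 hr
  have hs' : (0 : ℝ) < s := Nat.cast_pos.2 hs
  rw [gpmf_eq_sqrt_mul_exp, gpmf_eq_sqrt_mul_exp, mul_pow, sq_sqrt (by positivity), ← exp_nat_mul,
    mul_mul_mul_comm, ← exp_add]
  congr 2
  field_simp
  ring

open Complex in
theorem tsum_gpmf_sq_mul_gpmf_sub {r s : ℕ} (hr : 0 < r) (hs : 0 < s) (ℓ : ℝ) :
    ∑' j : ℤ, ((gpmf r j ^ 2 * gpmf s (ℓ - j) : ℝ) : ℂ) =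
      2 / π * (1 / (√(r * (2 * s + r)) : ℂ)) * cexp (-((r + s - 2 * ℓ) ^ 2 / (2 * s + r) : ℝ)) *
        ∑' t : ℤ, cexp (-π ^ 2 * t ^ 2 / (4 / r + 2 / s : ℝ)) *
          cexp (-2 * π * I * t * (r * (s + 2 * ℓ) / (2 * (2 * s + r)) : ℝ)) := by
  have hr' : (0 : ℝ) < r := Nat.cast_pos.2 hr
  have hs' : (0 : ℝ) < s := Nat.cast_pos.2 hs
  have hnorm : ((2 / (π * r) * √(2 / (π * s)) * √(π / (4 / r + 2 / s)) : ℝ) : ℂ) =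
      2 / π * (1 / (√(r * (2 * s + r)) : ℂ)) := by
    have hrs : 2 / (π * s) * (π / (4 / r + 2 / s)) = r / (2 * s + r) := by
      field_simp
      ring
    have : 0 < √r := sqrt_pos.2 hr'
    have : 0 < √(2 * s + r) := sqrt_pos.2 (by positivity)
    rw [mul_assoc, ← sqrt_mul (by positivity), hrs, sqrt_div hr'.le, sqrt_mul hr'.le]
    norm_cast
    field_simp
    exact sq_sqrt hr'.le
  set a : ℝ := 4 / r + 2 / s
  set μ : ℝ := r * (s + 2 * ℓ) / (2 * (2 * s + r))
  calc ∑' j : ℤ, ((gpmf r j ^ 2 * gpmf s (ℓ - j) : ℝ) : ℂ)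
      = ((2 / (π * r) * √(2 / (π * s)) : ℝ) : ℂ) * cexp (-((r + s - 2 * ℓ) ^ 2 / (2 * s + r) : ℝ)) *
          ∑' j : ℤ, cexp (-a * (j - μ) ^ 2) := by
        rw [← tsum_mul_left]
        refine tsum_congr fun j ↦ ?_
        rw [gpmf_sq_mul_gpmf_sub hr hs, sub_eq_add_neg, Real.exp_add]
        push_cast [a, μ]
        ring_nf
    _ = _ := by
        rw [Complex.tsum_exp_neg_mul_int_sub_sq (by positivity), ← hnorm]
        push_cast
        ring

/-- **Lattice sum of the triple Gaussian.**
For integers `n, m` with `m ≥ 2` and `N := n - 2m ≥ 1`, `ℓ := (n-m)/2 ∈ ℝ`,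
`α := 4/(m-1)`, `β := 2/N`, `μ := (m-1)(2N+m)/(2(2N+m-1))`, one has
`Σ_{j ∈ ℤ} g_{m-1}(j)²·g_N(ℓ-j)
  = (2/π)·(1/√((m-1)(2N+m-1)))·exp(-1/(2N+m-1))·Σ_{t ∈ ℤ} exp(-π²t²/(α+β))·exp(-2πi·t·μ)`,
together with `α + β = 2(2N+m-1)/((m-1)N)` and `2N+m-1 = 2n-3m-1`. -/
theorem triple_gaussian_lattice_sum
    (n m N : ℕ) (hm : 2 ≤ m) (hn : 2 * m < n) (hN : N = n - 2 * m)
    (ℓ α β μ : ℝ)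
    (hℓ : ℓ = ((n : ℝ) - m) / 2)
    (hα : α = 4 / ((m : ℝ) - 1))
    (hβ : β = 2 / (N : ℝ))
    (hμ : μ = ((m : ℝ) - 1) * (2 * (N : ℝ) + m) / (2 * (2 * (N : ℝ) + m - 1))) :
    (∑' j : ℤ, ((gpmf (m - 1) (j : ℝ) ^ 2 * gpmf N (ℓ - (j : ℝ)) : ℝ) : ℂ)
      = (2 / (π : ℂ)) *
          (1 / ((Real.sqrt (((m : ℝ) - 1) * (2 * (N : ℝ) + m - 1)) : ℝ) : ℂ)) *
          Complex.exp (-(1 : ℂ) / ((2 * (N : ℝ) + m - 1 : ℝ) : ℂ)) *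
          ∑' t : ℤ, Complex.exp (-(π : ℂ) ^ 2 * (t : ℂ) ^ 2 / ((α + β : ℝ) : ℂ)) *
            Complex.exp (-2 * (π : ℂ) * Complex.I * (t : ℂ) * (μ : ℂ))) ∧
    α + β = 2 * (2 * (N : ℝ) + m - 1) / (((m : ℝ) - 1) * N) ∧
    2 * (N : ℝ) + m - 1 = 2 * (n : ℝ) - 3 * m - 1 := by
  have hm_cast : ((m - 1 : ℕ) : ℝ) = (m : ℝ) - 1 := by rw [Nat.cast_sub (by omega)]; norm_num
  have hn_cast : (n : ℝ) = N + 2 * m := by rw [hN, Nat.cast_sub hn.le]; push_cast; ring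
  have hm1 : (m : ℝ) - 1 ≠ 0 := by rw [← hm_cast]; exact Nat.cast_ne_zero.2 (by omega)
  have hN0 : (N : ℝ) ≠ 0 := Nat.cast_ne_zero.2 (by omega)
  refine ⟨?_, by rw [hα, hβ]; field_simp; ring, by rw [hn_cast]; ring⟩
  rw [tsum_gpmf_sq_mul_gpmf_sub (by omega) (by omega), hm_cast]
  have hrate : 4 / ((m : ℝ) - 1) + 2 / N = α + β := by rw [hα, hβ]
  have hcenter : ((m : ℝ) - 1) * (N + 2 * ℓ) / (2 * (2 * N + ((m : ℝ) - 1))) = μ := by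
    rw [hμ, hℓ, hn_cast]; ring
  have hoffset : ((m : ℝ) - 1 + N - 2 * ℓ) ^ 2 / (2 * N + ((m : ℝ) - 1)) = 1 / (2 * N + m - 1) := by
    rw [hℓ, hn_cast]; ring
  rw [hrate, hcenter, hoffset, show (2 : ℝ) * N + ((m : ℝ) - 1) = 2 * N + m - 1 by ring,
    Complex.ofReal_div, Complex.ofReal_one, neg_div]
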